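/- Let A be a finite category and k^• a weighting on A. Let X : A → Set be a functor with each set Xa finite, and suppose X is familially representable, i.e. X is isomorphic to a finite coproduct of representable functors A(a_i, −). Then the colimit of X is finite and |colim X| = ∑_a k^a · |Xa|, the sum being over all objects a of A. -/

import Mathlib

/-!
The colimit of a representable `A(a, -)` is a point, since every element `f : a ⟶ b` is
the image of `𝟙 a`; so the colimit of `∐ i, A(g i, -)` is the index set `ι`. On the other
hand, `∑ a, k a * |A(g i, a)| = 1` for each `i` because `k` is a weighting, and summing over `i`
gives `∑ a, k a * |X a| = |ι|`.
-/

open CategoryTheory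

/-- The coproduct of the representable functors `A(g i, -)`, `i : ι`. -/
def famRep {A : Type u} [Category.{v} A] {ι : Type u} (g : ι → A) :
    A ⥤ Type (max u v) where
  obj b := Σ i : ι, (g i ⟶ b)
  map f := TypeCat.ofHom fun p => ⟨p.1, p.2 ≫ f⟩

namespace famRep

variable {A : Type u} [Category.{v} A] {ι : Type u} (g : ι → A)

def cocone : Limits.Cocone (famRep g) where
  pt := ULift.{v} ι
  ι := { app := fun _ => TypeCat.ofHom fun p => ⟨p.1⟩ }

def isColimitCocone : Limits.IsColimit (cocone g) where
  desc s := TypeCat.ofHom fun i => s.ι.app (g i.down) ⟨i.down, 𝟙 _⟩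
  fac s b := by
    ext ⟨i, f⟩
    have h : s.ι.app b ⟨i, 𝟙 _ ≫ f⟩ = s.ι.app (g i) ⟨i, 𝟙 _⟩ :=
      ConcreteCategory.congr_hom (s.ι.naturality f) ⟨i, 𝟙 _⟩
    rw [Category.id_comp] at h
    exact h.symm
  uniq s m hm := by
    ext i
    exact ConcreteCategory.congr_hom (hm (g i.down)) ⟨i.down, 𝟙 _⟩

noncomputable def colimitEquivOfIso {X : A ⥤ Type (max u v)} (e : X ≅ famRep g) :
    Limits.colimit X ≃ ULift.{v} ι :=
  (Limits.HasColimit.isoOfNatIso e ≪≫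
    Limits.colimit.isoColimitCocone ⟨cocone g, isColimitCocone g⟩).toEquiv

theorem card_obj_of_iso [Fintype ι] [∀ a b : A, Fintype (a ⟶ b)] {X : A ⥤ Type (max u v)}
    [∀ a : A, Fintype (X.obj a)] (e : X ≅ famRep g) (a : A) :
    Fintype.card (X.obj a) = ∑ i, Fintype.card (g i ⟶ a) := by
  rw [← Nat.card_eq_fintype_card, Nat.card_congr (e.app a).toEquiv]
  change Nat.card (Σ i, g i ⟶ a) = _
  rw [Nat.card_eq_fintype_card, Fintype.card_sigma]

end famRep

def IsWeighting {A : Type u} [Category.{v} A] [Fintype A] [∀ a b : A, Fintype (a ⟶ b)]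
    (k : A → ℚ) : Prop :=
  ∀ a : A, ∑ b : A, (Fintype.card (a ⟶ b) : ℚ) * k b = 1

theorem IsWeighting.sum_mul_sum_card_hom {A : Type u} [Category.{v} A] [Fintype A]
    [∀ a b : A, Fintype (a ⟶ b)] {k : A → ℚ} (hk : IsWeighting k) {ι : Type*} [Fintype ι]
    (g : ι → A) : ∑ a, k a * ∑ i, (Fintype.card (g i ⟶ a) : ℚ) = Fintype.card ι := by
  simp_rw [Finset.mul_sum, mul_comm (k _)]
  rw [Finset.sum_comm]
  simp [hk _]

/-- **Proposition 3.1** (Leinster). Let `A` be a finite category with a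
weighting `k`, and let `X : A ⥤ Set` be a finite familially representable
functor (a finite coproduct of representables).  Then the colimit of `X` is
finite, of cardinality `∑_a k^a · |Xa|`. -/
theorem stmt_14 {A : Type u} [Category.{v} A] [Fintype A]
    [∀ a b : A, Fintype (a ⟶ b)]
    (k : A → ℚ) (hk : ∀ a : A, ∑ b : A, (Fintype.card (a ⟶ b) : ℚ) * k b = 1)
    (X : A ⥤ Type (max u v)) [∀ a : A, Fintype (X.obj a)]
    (hfr : ∃ (ι : Type u) (_ : Fintype ι) (g : ι → A), Nonempty (X ≅ famRep g)) :
    Finite (Limits.colimit X) ∧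
      (Nat.card (Limits.colimit X) : ℚ) =
        ∑ a : A, k a * (Fintype.card (X.obj a) : ℚ) := by
  obtain ⟨ι, _, g, ⟨e⟩⟩ := hfr
  have ecolim := (famRep.colimitEquivOfIso g e).trans Equiv.ulift
  refine ⟨Finite.of_equiv _ ecolim.symm, ?_⟩
  rw [Nat.card_congr ecolim, Nat.card_eq_fintype_card,
    ← IsWeighting.sum_mul_sum_card_hom hk g]
  simp_rw [famRep.card_obj_of_iso g e, Nat.cast_sum]
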